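/- With the sign q-permutation operator T' on V⊗V defined by: T'(v_k⊗v_l) = (-1)^{|v_k|} v_k⊗v_l if k=l; T'(v_k⊗v_l) = (2(-1)^{|v_k||v_l|}/(q+q^{-1})) v_l⊗v_k + ((q-q^{-1})/(q+q^{-1})) v_k⊗v_l if k<l; and T'(v_k⊗v_l) = (2(-1)^{|v_k||v_l|}/(q+q^{-1})) v_l⊗v_k − ((q-q^{-1})/(q+q^{-1})) v_k⊗v_l if k>l; and φ^{⊗2} the super tensor square of φ(v_i)=v_{2m-i+1}, one has φ^{⊗2}∘T' = −T'∘φ^{⊗2} on V⊗V. -/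
import Mathlib


open RatFunc

/-- Degree of basis vector `v_k`, `k : Fin (2m)` zero-based: `0` iff `k < m`. -/
def degB (m : ℕ) (k : Fin (2 * m)) : ℕ := if (k : ℕ) < m then 0 else 1

/-- The sign `q`-permutation operator `T'` on `V ⊗ V` over `K = ℚ(q)` (with `q = X`),
in coordinates with respect to the basis `v_k ⊗ v_l`:
`T'(v_k ⊗ v_l) = (-1)^{|v_k|} v_k ⊗ v_l` if `k = l`;
`T'(v_k ⊗ v_l) = (2(-1)^{|v_k||v_l|}/(q+q⁻¹)) v_l ⊗ v_k + ((q-q⁻¹)/(q+q⁻¹)) v_k ⊗ v_l`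
if `k < l`, and with `−` in place of `+` before the second term if `k > l`. -/
noncomputable def Tprime (m : ℕ) :
    ((Fin (2 * m) × Fin (2 * m)) → RatFunc ℚ) → ((Fin (2 * m) × Fin (2 * m)) → RatFunc ℚ) :=
  fun f p =>
    if p.1 = p.2 then ((-1 : RatFunc ℚ) ^ degB m p.1) * f p
    else
      (if (p.1 : ℕ) < (p.2 : ℕ) then (X - X⁻¹) / (X + X⁻¹) else -((X - X⁻¹) / (X + X⁻¹)))
          * f p
        + (2 * (-1 : RatFunc ℚ) ^ (degB m p.1 * degB m p.2) / (X + X⁻¹)) * f (p.2, p.1)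

/-- The super tensor square `φ^{⊗2}` of the odd map `φ(v_i) = v_{2m-i+1}` (zero-based
`k ↦ Fin.rev k`), which on the basis acts by `v_k ⊗ v_l ↦ (-1)^{|v_k|} v_{φ(k)} ⊗ v_{φ(l)}`. -/
noncomputable def phiSq (m : ℕ) :
    ((Fin (2 * m) × Fin (2 * m)) → RatFunc ℚ) → ((Fin (2 * m) × Fin (2 * m)) → RatFunc ℚ) :=
  fun f p => ((-1 : RatFunc ℚ) ^ degB m (Fin.rev p.1)) * f (Fin.rev p.1, Fin.rev p.2)

/-- With `dim V₀ = dim V₁ = m`, the sign `q`-permutation operator `T'` on `V ⊗ V` and the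
super tensor square `φ^{⊗2}` anticommute: `φ^{⊗2} ∘ T' = −T' ∘ φ^{⊗2}`. -/
theorem stmt_16 (m : ℕ) :
    ∀ f : (Fin (2 * m) × Fin (2 * m)) → RatFunc ℚ,
      phiSq m (Tprime m f) = -Tprime m (phiSq m f) := by
  intro f
  funext p
  obtain ⟨k, l⟩ := p
  have hrev : ∀ j : Fin (2 * m), degB m (Fin.rev j) = 1 - degB m j := by
    intro j
    have hj := j.is_lt
    simp only [degB, Fin.val_rev]
    split_ifs <;> omega
  have hrevlt : ((Fin.rev k : ℕ) < (Fin.rev l : ℕ)) ↔ ((l : ℕ) < (k : ℕ)) := by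
    have hk := k.is_lt; have hl := l.is_lt
    simp only [Fin.val_rev]; omega
  have hd : ∀ j : Fin (2 * m), degB m j = 0 ∨ degB m j = 1 := by
    intro j; unfold degB; split_ifs <;> simp
  by_cases hkl : k = l
  · subst hkl
    simp only [phiSq, Tprime, Pi.neg_apply, if_pos rfl]
    rcases hd k with h | h <;> simp [hrev, h] <;> ring
  · have h1 : Fin.rev k ≠ Fin.rev l := fun h => hkl (Fin.rev_inj.mp h)
    have hne : (k : ℕ) ≠ (l : ℕ) := fun h => hkl (Fin.ext h)
    simp only [phiSq, Tprime, Pi.neg_apply, if_neg h1, if_neg hkl]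
    rw [hrev k, hrev l]
    rcases Nat.lt_or_ge (k : ℕ) (l : ℕ) with hlt | hge
    · have hc1 : ¬ ((Fin.rev k : ℕ) < (Fin.rev l : ℕ)) := hrevlt.not.mpr (by omega)
      rw [if_pos hlt, if_neg hc1]
      rcases hd k with ha | ha <;> rcases hd l with hb | hb <;>
        simp [ha, hb] <;> ring
    · have hlt : (l : ℕ) < (k : ℕ) := by omega
      have hc1 : ¬ ((k : ℕ) < (l : ℕ)) := by omega
      rw [if_neg hc1, if_pos (hrevlt.mpr hlt)]
      rcases hd k with ha | ha <;> rcases hd l with hb | hb <;>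
        simp [ha, hb] <;> ring
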